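/- Let μ : ℝ → ℝ be twice differentiable, let x* ∈ ℝ, and set A := μ'(x*) > 0 and B := μ''(x*) < 0. Define g(x) = μ(x) for x ≤ x* and g(x) = μ(x*) + (A²/B)·ln(−A/B) − (A²/B)·ln(x − x* − A/B) for x > x*. Then g is twice differentiable at every point of ℝ, with second derivative g''(x) = μ''(x) for x ≤ x* and g''(x) = A² / ( B·(x − x* − A/B)² ) for x ≥ x*; in particular g''(x*) = μ''(x*) = B. -/

import Mathlib

/-!
Beyond `x*` the extension is `c - C log (x - k)` with `C = A²/B` and `k = x* + A/B`, whose
derivatives are `-C/(x - k)` and `C/(x - k)²`. Since `x* - k = -A/B`, the value, slope and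
curvature of this branch at `x*` are `μ x*`, `A` and `B`, so gluing it to `μ` at `x*` twice
(first for `g`, then for `g'`) gives a twice differentiable function.
-/

open Filter Set

theorem hasDerivAt_ite_le {f h f' h' : ℝ → ℝ} {a : ℝ}
    (hf : ∀ x ≤ a, HasDerivAt f (f' x) x) (hh : ∀ x ≥ a, HasDerivAt h (h' x) x)
    (hfa : f a = h a) (hfa' : f' a = h' a) (x : ℝ) :
    HasDerivAt (fun y => if y ≤ a then f y else h y) (if x ≤ a then f' x else h' x) x := by
  rcases lt_trichotomy x a with hx | rfl | hx
  · rw [if_pos hx.le]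
    refine (hf x hx.le).congr_of_eventuallyEq ?_
    filter_upwards [Iio_mem_nhds hx] with y hy
    exact if_pos (le_of_lt hy)
  · rw [if_pos le_rfl]
    have hleft : HasDerivWithinAt (fun y => if y ≤ x then f y else h y) (f' x) (Iic x) x :=
      (hf x le_rfl).hasDerivWithinAt.congr (fun y hy => if_pos hy) (if_pos le_rfl)
    have hright : HasDerivWithinAt (fun y => if y ≤ x then f y else h y) (f' x) (Ici x) x := by
      rw [hfa']
      refine (hh x le_rfl).hasDerivWithinAt.congr (fun y hy => ?_) (by rw [if_pos le_rfl, hfa])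
      rcases (mem_Ici.mp hy).eq_or_lt with rfl | hy
      · rw [if_pos le_rfl, hfa]
      · exact if_neg (not_le.mpr hy)
    simpa only [Iic_union_Ici, hasDerivWithinAt_univ] using hleft.union hright
  · rw [if_neg (not_le.mpr hx)]
    refine (hh x hx.le).congr_of_eventuallyEq ?_
    filter_upwards [Ioi_mem_nhds hx] with y hy
    exact if_neg (not_le.mpr hy)

theorem hasDerivAt_const_sub_mul_log_sub {c C k x : ℝ} (hx : x ≠ k) :
    HasDerivAt (fun y => c - C * Real.log (y - k)) (-C / (x - k)) x :=
  ((hasDerivAt_const x c).sub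
    ((((hasDerivAt_id' x).sub_const k).log (sub_ne_zero.mpr hx)).const_mul C)).congr_deriv
    (by ring)

theorem hasDerivAt_neg_div_sub {C k x : ℝ} (hx : x ≠ k) :
    HasDerivAt (fun y => -C / (y - k)) (C / (x - k) ^ 2) x :=
  ((hasDerivAt_const x (-C)).div ((hasDerivAt_id' x).sub_const k) (sub_ne_zero.mpr hx)).congr_deriv
    (by ring)

/-- the upper log-extension g of μ beyond x* (with A = μ'(x*) > 0 and
B = μ''(x*) < 0) is twice differentiable everywhere, with g'' = μ'' on (-∞, x*] and
g''(x) = A²/(B(x − x* − A/B)²) on [x*, ∞); in particular g''(x*) = B. -/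
theorem stmt_8 (μ μ' μ'' : ℝ → ℝ)
    (hμd : ∀ x, HasDerivAt μ (μ' x) x)
    (hμd' : ∀ x, HasDerivAt μ' (μ'' x) x)
    (xs A B : ℝ) (hA : A = μ' xs) (hB : B = μ'' xs)
    (hApos : 0 < A) (hBneg : B < 0)
    (g : ℝ → ℝ)
    (hg : ∀ x, g x = if x ≤ xs then μ x
      else μ xs + (A^2 / B) * Real.log (-A / B)
        - (A^2 / B) * Real.log (x - xs - A / B)) :
    ∃ g' g'' : ℝ → ℝ,
      (∀ x, HasDerivAt g (g' x) x) ∧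
      (∀ x, HasDerivAt g' (g'' x) x) ∧
      (∀ x ≤ xs, g'' x = μ'' x) ∧
      (∀ x ≥ xs, g'' x = A^2 / (B * (x - xs - A / B)^2)) ∧
      g'' xs = B := by
  set C := A ^ 2 / B with hC_def
  set k := xs + A / B
  obtain rfl : g = fun x =>
      if x ≤ xs then μ x else μ xs + C * Real.log (-A / B) - C * Real.log (x - k) := funext fun x => by rw [hg x, sub_sub]
  have hB0 : B ≠ 0 := hBneg.ne
  have hxs_sub : xs - k = -A / B := by ring
  have hne_k : ∀ x ≥ xs, x ≠ k := fun x hx => by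
    have : 0 < -A / B := div_pos_of_neg_of_neg (neg_lt_zero.mpr hApos) hBneg
    linarith
  have hslope : -C / (xs - k) = A := by rw [hxs_sub, hC_def]; field_simp
  have hcurv : C / (xs - k) ^ 2 = B := by rw [hxs_sub, hC_def]; field_simp
  refine ⟨fun x => if x ≤ xs then μ' x else -C / (x - k),
    fun x => if x ≤ xs then μ'' x else C / (x - k) ^ 2,
    hasDerivAt_ite_le (fun x _ => hμd x) (fun x hx => hasDerivAt_const_sub_mul_log_sub (hne_k x hx))
      (by rw [hxs_sub, add_sub_cancel_right]) (by rw [hslope, hA]),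
    hasDerivAt_ite_le (fun x _ => hμd' x) (fun x hx => hasDerivAt_neg_div_sub (hne_k x hx))
      (by rw [hslope, hA]) (by rw [hcurv, hB]),
    fun x hx => if_pos hx, fun x hx => ?_, if_pos le_rfl |>.trans hB.symm⟩
  change (if x ≤ xs then μ'' x else C / (x - k) ^ 2) = _
  rw [div_div, sub_sub]
  rcases hx.eq_or_lt with rfl | hlt
  · rw [if_pos le_rfl, ← hB, sub_add_cancel_left]
    field_simp
  · exact if_neg (not_le.mpr hlt)
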